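/- Let c ≥ 0, a, b > -1 with c+a > 0, c+b > 0, and let ζ_n = (μ_1⋯μ_n/(λ̂_0 λ_1⋯λ_{n-1}))^{1/2} · (c+a+1)_n/(c+1)_n, where λ̂_0 = (c+a+1)/(2c+a+b+2), λ_n = ((n+c+a+1)/(2n+2c+a+b+2))·((n+c+a+b+1)/(2n+2c+a+b+1)), μ_n = ((n+c)/(2n+2c+a+b+1))·((n+c+b)/(2n+2c+a+b)). Then √(2n)·ζ_n → (Γ(c+1)Γ(c+a+b+2)/(Γ(c+a+1)Γ(c+b+1)))^{1/2} as n → ∞. -/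

import Mathlib

/-!
Both products telescope into Pochhammer symbols: with `s = 2c+a+b`,
`∏ μ_i = (c+1)_n (c+b+1)_n / (s+2)_{2n}` and `λ̂_0 ∏ λ_i = (c+a+1)_n (c+a+b+2)_{n-1} / (s+2)_{2n-1}`,
so `ζ_n² = (c+a+1)_n (c+b+1)_n (c+a+b+1+n) / ((c+1)_n (c+a+b+2)_n (2n+s+1))`.
Euler's limit formula `Γ(x) = lim n^x n! / (x)_{n+1}` gives `n^{y-x} (x)_n / (y)_n → Γ(y)/Γ(x)`.
Since `((c+1) - (c+a+1)) + ((c+a+b+2) - (c+b+1)) = 1`, `2n ζ_n²` is the product of two such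
sequences and of `2(c+a+b+1+n) / (2n+s+1) → 1`.
-/

open Filter Topology

/-- The coefficient `λ_n(c)` of associated Jacobi polynomials. -/
noncomputable def lamJ (a b c : ℝ) (n : ℕ) : ℝ :=
  (((n : ℝ) + c + a + 1) / (2*(n : ℝ) + 2*c + a + b + 2)) *
    (((n : ℝ) + c + a + b + 1) / (2*(n : ℝ) + 2*c + a + b + 1))

/-- The coefficient `μ_n(c)` of associated Jacobi polynomials. -/
noncomputable def muJ (a b c : ℝ) (n : ℕ) : ℝ :=
  (((n : ℝ) + c) / (2*(n : ℝ) + 2*c + a + b + 1)) *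
    (((n : ℝ) + c + b) / (2*(n : ℝ) + 2*c + a + b))

/-- The modified coefficient `λ̂_0(c)`. -/
noncomputable def hatLam0 (a b c : ℝ) : ℝ := (c + a + 1) / (2*c + a + b + 2)

/-- The norm `ζ_n = (μ_1⋯μ_n / (λ̂_0 λ_1⋯λ_{n-1}))^{1/2} · (c+a+1)_n/(c+1)_n`. -/
noncomputable def zetaJ (a b c : ℝ) (n : ℕ) : ℝ :=
  Real.sqrt ((∏ i ∈ Finset.Icc 1 n, muJ a b c i) /
      (hatLam0 a b c * ∏ i ∈ Finset.Ico 1 n, lamJ a b c i)) *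
    ((ascPochhammer ℝ n).eval (c + a + 1) / (ascPochhammer ℝ n).eval (c + 1))

open Finset

theorem ascPochhammer_eval_eq_prod_range {S : Type*} [CommSemiring S] (x : S) (n : ℕ) :
    (ascPochhammer S n).eval x = ∏ j ∈ range n, (x + j) := by
  induction n with
  | zero => simp
  | succ n ih => rw [ascPochhammer_succ_eval, prod_range_succ, ih]

theorem Real.GammaSeq_eq_ascPochhammer (s : ℝ) (n : ℕ) :
    Real.GammaSeq s n = (n : ℝ) ^ s * n.factorial / (ascPochhammer ℝ (n + 1)).eval s := by
  rw [Real.GammaSeq, ascPochhammer_eval_eq_prod_range]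

theorem ne_neg_natCast_of_pos {x : ℝ} (hx : 0 < x) (k : ℕ) : x ≠ -k := by
  have : (0 : ℝ) ≤ k := k.cast_nonneg
  intro h
  linarith

theorem ascPochhammer_eval_ne_zero {x : ℝ} (hx : ∀ k : ℕ, x ≠ -k) (n : ℕ) :
    (ascPochhammer ℝ n).eval x ≠ 0 := by
  rw [Ne, ascPochhammer_eval_eq_zero_iff]
  rintro ⟨k, -, hk⟩
  exact hx k (by rw [hk, neg_neg])

theorem tendsto_rpow_mul_ascPochhammer_div {x y : ℝ} (hx : ∀ k : ℕ, x ≠ -k)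
    (hy : ∀ k : ℕ, y ≠ -k) :
    Tendsto (fun n : ℕ => (n : ℝ) ^ (y - x) *
        ((ascPochhammer ℝ n).eval x / (ascPochhammer ℝ n).eval y)) atTop
      (𝓝 (Real.Gamma y / Real.Gamma x)) := by
  have h := ((Real.GammaSeq_tendsto_Gamma y).div (Real.GammaSeq_tendsto_Gamma x)
    (Real.Gamma_ne_zero hx)).mul (tendsto_add_mul_div_add_mul_atTop_nhds y x 1 one_ne_zero)
  rw [div_one, mul_one] at h
  refine h.congr' ?_
  filter_upwards [eventually_ne_atTop 0] with n hn
  have hn' : (0 : ℝ) < n := by positivity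
  have hxn : x + n ≠ 0 := fun h => hx n (by linarith)
  have hyn : y + n ≠ 0 := fun h => hy n (by linarith)
  have := ascPochhammer_eval_ne_zero hx n
  have := ascPochhammer_eval_ne_zero hy n
  rw [Pi.div_apply, Real.GammaSeq_eq_ascPochhammer, Real.GammaSeq_eq_ascPochhammer,
    ascPochhammer_succ_eval, ascPochhammer_succ_eval, Real.rpow_sub hn']
  field_simp

theorem prod_muJ (a b c : ℝ) (n : ℕ) :
    ∏ i ∈ Icc 1 n, muJ a b c i =
      (ascPochhammer ℝ n).eval (c + 1) * (ascPochhammer ℝ n).eval (c + b + 1) /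
        (ascPochhammer ℝ (2 * n)).eval (2 * c + a + b + 2) := by
  induction n with
  | zero => simp
  | succ n ih =>
    rw [prod_Icc_succ_top (by omega), ih, muJ, show 2 * (n + 1) = 2 * n + 1 + 1 by ring,
      ascPochhammer_succ_eval, ascPochhammer_succ_eval, ascPochhammer_succ_eval,
      ascPochhammer_succ_eval, div_mul_div_comm, div_mul_div_comm]
    push_cast
    congr 1 <;> ring

theorem hatLam0_mul_prod_lamJ (a b c : ℝ) (n : ℕ) :
    hatLam0 a b c * ∏ i ∈ Ico 1 (n + 1), lamJ a b c i =
      (ascPochhammer ℝ (n + 1)).eval (c + a + 1) * (ascPochhammer ℝ n).eval (c + a + b + 2) /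
        (ascPochhammer ℝ (2 * n + 1)).eval (2 * c + a + b + 2) := by
  induction n with
  | zero => simp [hatLam0]
  | succ n ih =>
    rw [prod_Ico_succ_top (by omega), ← mul_assoc, ih, lamJ,
      show 2 * (n + 1) + 1 = 2 * n + 1 + 1 + 1 by ring,
      ascPochhammer_succ_eval (n + 1), ascPochhammer_succ_eval n (c + a + b + 2),
      ascPochhammer_succ_eval (2 * n + 1 + 1), ascPochhammer_succ_eval (2 * n + 1),
      div_mul_div_comm, div_mul_div_comm]
    push_cast
    congr 1 <;> ring

theorem sqrt_two_mul_mul_zetaJ {a b c : ℝ} (hr : 0 < c + 1) (hp : 0 < c + a + 1)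
    (ht : 0 < c + a + b + 2) (hs : 0 < 2 * c + a + b + 2) {n : ℕ} (hn : n ≠ 0) :
    Real.sqrt (2 * (n : ℝ)) * zetaJ a b c n =
      Real.sqrt ((n : ℝ) ^ ((c + 1) - (c + a + 1)) *
          ((ascPochhammer ℝ n).eval (c + a + 1) / (ascPochhammer ℝ n).eval (c + 1)) *
        ((n : ℝ) ^ ((c + a + b + 2) - (c + b + 1)) *
          ((ascPochhammer ℝ n).eval (c + b + 1) / (ascPochhammer ℝ n).eval (c + a + b + 2))) *
        ((2 * (c + a + b + 1) + 2 * n) / ((2 * c + a + b + 1) + 2 * n))) := by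
  obtain ⟨m, rfl⟩ : ∃ m, n = m + 1 := ⟨n - 1, by omega⟩
  have hrm := ascPochhammer_pos (m + 1) _ hr
  have hpm := ascPochhammer_pos (m + 1) _ hp
  have htm := ascPochhammer_pos m _ ht
  have hsm := ascPochhammer_pos (2 * m + 1) _ hs
  have hN : (0 : ℝ) < m + 1 := by positivity
  have hNe := Real.rpow_pos_of_pos hN ((c + 1) - (c + a + 1))
  have hm : (0 : ℝ) ≤ m := m.cast_nonneg
  push_cast
  conv_lhs => rw [zetaJ, prod_muJ, hatLam0_mul_prod_lamJ,
    ← Real.sqrt_sq (div_nonneg hpm.le hrm.le), ← Real.sqrt_mul' _ (sq_nonneg _),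
    ← Real.sqrt_mul (by positivity)]
  congr 1
  rw [show c + a + b + 2 - (c + b + 1) = 1 - ((c + 1) - (c + a + 1)) by ring,
    Real.rpow_sub hN 1, Real.rpow_one, show 2 * (m + 1) = 2 * m + 1 + 1 by ring,
    ascPochhammer_succ_eval (2 * m + 1), ascPochhammer_succ_eval m (c + a + b + 2)]
  push_cast
  rw [show 2 * c + a + b + 2 + (2 * (m : ℝ) + 1) = 2 * c + a + b + 1 + 2 * (m + 1) by ring]
  have : 2 * c + a + b + 1 + 2 * ((m : ℝ) + 1) ≠ 0 := by linarith
  have : c + a + b + 2 + (m : ℝ) ≠ 0 := by linarith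
  field_simp
  ring

theorem zeta_asymptotic_general (a b c : ℝ) (ha : -1 < a) (hc : 0 ≤ c)
    (hca : 0 < c + a) (hcb : 0 < c + b) :
    Tendsto (fun n : ℕ => Real.sqrt (2 * (n : ℝ)) * zetaJ a b c n) atTop
      (𝓝 (Real.sqrt (Real.Gamma (c + 1) * Real.Gamma (c + a + b + 2) /
        (Real.Gamma (c + a + 1) * Real.Gamma (c + b + 1))))) := by
  have hr : 0 < c + 1 := by linarith
  have hp : 0 < c + a + 1 := by linarith
  have hq : 0 < c + b + 1 := by linarith
  have ht : 0 < c + a + b + 2 := by linarith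
  have hs : 0 < 2 * c + a + b + 2 := by linarith
  have hpr := tendsto_rpow_mul_ascPochhammer_div (ne_neg_natCast_of_pos hp)
    (ne_neg_natCast_of_pos hr)
  have hqt := tendsto_rpow_mul_ascPochhammer_div (ne_neg_natCast_of_pos hq)
    (ne_neg_natCast_of_pos ht)
  have hlin := tendsto_add_mul_div_add_mul_atTop_nhds (2 * (c + a + b + 1)) (2 * c + a + b + 1) 2
    two_ne_zero
  rw [div_self two_ne_zero] at hlin
  have hlim := ((hpr.mul hqt).mul hlin).sqrt
  rw [mul_one, ← mul_div_mul_comm] at hlim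
  refine hlim.congr' ?_
  filter_upwards [eventually_ne_atTop 0] with n hn
  exact (sqrt_two_mul_mul_zetaJ hr hp ht hs hn).symm

/-- `√(2n)·ζ_n → (Γ(c+1)Γ(c+a+b+2)/(Γ(c+a+1)Γ(c+b+1)))^{1/2}` as `n → ∞`. -/
theorem zeta_asymptotic (a b c : ℝ) (ha : -1 < a) (hb : -1 < b) (hc : 0 ≤ c)
    (hca : 0 < c + a) (hcb : 0 < c + b) :
    Tendsto (fun n : ℕ => Real.sqrt (2 * (n : ℝ)) * zetaJ a b c n) atTop
      (𝓝 (Real.sqrt (Real.Gamma (c + 1) * Real.Gamma (c + a + b + 2) /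
        (Real.Gamma (c + a + 1) * Real.Gamma (c + b + 1))))) :=
  zeta_asymptotic_general a b c ha hc hca hcb
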